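/- Let X ~ N(0,1), Z ~ N(0,1) independent, λ > 0, and condition on S = {|X + Z| > λ}. Define the Rao–Blackwellized residual u = X − (φ(−λ+X) − φ(−λ−X))/(Φ(−λ+X) + Φ(−λ−X)). Then for every even integer n ≥ 2, E[u^n | S] ≤ ((1/√(2π))/(2Φ(−λ)))^n + (1/(2Φ(−λ/√2)))·E[Y^n] where Y ~ N(0,1); consequently there exists K' > 0 (depending on λ) such that (E[u^n | S])^{1/n} ≤ K'·√n for all n ≥ 1, i.e., u is sub-Gaussian conditional on selection. -/

import Mathlib

/-!
Write `u = X - g X`, where `g` is the correction term. `g` is odd, and for `x ≥ 0` its numerator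
lies in `[0, 1/√(2π)]` while its denominator is at least `2Φ(-λ)`, so `0 ≤ g x ≤ B` with
`B = (1/√(2π)) / (2Φ(-λ))`. Hence `|u| ≤ max B |X|` everywhere, and
`E[|u|ⁿ ∣ S] ≤ Bⁿ + E|X|ⁿ / P(S)`, where `P(S) = 2Φ(-λ/√2)` because `X + Z ~ N(0, 2)`.
For even `n` this is the first claim; together with `E|Y|ⁿ ≤ 2 (√n)ⁿ` it gives the second.
-/

open MeasureTheory ProbabilityTheory

/-- Standard normal pdf. -/
noncomputable def stdPdf (x : ℝ) : ℝ := Real.exp (-(x ^ 2) / 2) / Real.sqrt (2 * Real.pi)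

/-- Standard normal cdf. -/
noncomputable def stdCdf (x : ℝ) : ℝ := ∫ t in Set.Iic x, stdPdf t

open Real Set

lemma stdPdf_eq_gaussianPDFReal : stdPdf = gaussianPDFReal 0 1 := by
  ext x
  simp [stdPdf, gaussianPDFReal, div_eq_inv_mul]

lemma stdPdf_nonneg (x : ℝ) : 0 ≤ stdPdf x := by
  rw [stdPdf_eq_gaussianPDFReal]; exact gaussianPDFReal_nonneg 0 1 x

lemma continuous_stdPdf : Continuous stdPdf := by
  unfold stdPdf; fun_prop

lemma integrable_stdPdf : Integrable stdPdf := by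
  rw [stdPdf_eq_gaussianPDFReal]; exact integrable_gaussianPDFReal 0 1

lemma stdPdf_le_stdPdf_of_abs_le {a b : ℝ} (h : |a| ≤ |b|) : stdPdf b ≤ stdPdf a := by
  have hsq : a ^ 2 ≤ b ^ 2 := sq_le_sq.mpr h
  unfold stdPdf
  gcongr

lemma stdPdf_le (x : ℝ) : stdPdf x ≤ 1 / √(2 * π) := by
  simpa [stdPdf] using stdPdf_le_stdPdf_of_abs_le (abs_zero.trans_le (abs_nonneg x))

lemma gaussianReal_Iic (x : ℝ) : gaussianReal 0 1 (Iic x) = ENNReal.ofReal (stdCdf x) := by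
  rw [gaussianReal_apply_eq_integral 0 one_ne_zero, stdCdf, stdPdf_eq_gaussianPDFReal]

lemma stdCdf_pos (x : ℝ) : 0 < stdCdf x := by
  rw [← ENNReal.ofReal_pos, ← gaussianReal_Iic, pos_iff_ne_zero]
  intro h
  simpa using gaussianReal_absolutelyContinuous' 0 one_ne_zero h

lemma stdCdf_eq_add_intervalIntegral {a b : ℝ} (hab : a ≤ b) :
    stdCdf b = stdCdf a + ∫ t in a..b, stdPdf t := by
  rw [intervalIntegral.integral_of_le hab, stdCdf, stdCdf, ← Iic_union_Ioc_eq_Iic hab,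
    setIntegral_union (Iic_disjoint_Ioc le_rfl) measurableSet_Ioc
      integrable_stdPdf.integrableOn integrable_stdPdf.integrableOn]

/-- Reflecting `[a, a + x]` through `a` onto `[a - x, a]` moves every point farther from `0`. -/
lemma intervalIntegral_stdPdf_left_le_right {a x : ℝ} (ha : a ≤ 0) (hx : 0 ≤ x) :
    ∫ t in a - x..a, stdPdf t ≤ ∫ t in a..a + x, stdPdf t := by
  have hreflect : ∫ t in a..a + x, stdPdf (2 * a - t) = ∫ t in a - x..a, stdPdf t := by
    rw [intervalIntegral.integral_comp_sub_left stdPdf (2 * a)]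
    ring_nf
  rw [← hreflect]
  refine intervalIntegral.integral_mono_on (by linarith)
    ((continuous_stdPdf.comp (continuous_const.sub continuous_id)).intervalIntegrable _ _)
    (continuous_stdPdf.intervalIntegrable _ _) fun t ⟨hat, _⟩ => ?_
  apply stdPdf_le_stdPdf_of_abs_le
  rw [abs_of_nonpos (by linarith : 2 * a - t ≤ 0), abs_le]
  constructor <;> linarith

lemma two_mul_stdCdf_le_add {a x : ℝ} (ha : a ≤ 0) (hx : 0 ≤ x) :
    2 * stdCdf a ≤ stdCdf (a + x) + stdCdf (a - x) := by
  have hright := stdCdf_eq_add_intervalIntegral (by linarith : a ≤ a + x)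
  have hleft := stdCdf_eq_add_intervalIntegral (by linarith : a - x ≤ a)
  linarith [intervalIntegral_stdPdf_left_le_right ha hx]

lemma gaussianReal_Iio (x : ℝ) : gaussianReal 0 1 (Iio x) = ENNReal.ofReal (stdCdf x) := by
  have := nullSingletonClass_gaussianReal (μ := 0) one_ne_zero
  rw [measure_congr Iio_ae_eq_Iic, gaussianReal_Iic]

lemma gaussianReal_Ioi (x : ℝ) : gaussianReal 0 1 (Ioi x) = ENNReal.ofReal (stdCdf (-x)) := by
  conv_lhs => rw [← neg_zero, ← gaussianReal_map_neg]
  rw [Measure.map_apply measurable_neg measurableSet_Ioi, ← gaussianReal_Iio]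
  congr 1
  ext y
  simp

lemma gaussianReal_setOf_lt_abs {a : ℝ} (ha : 0 ≤ a) :
    gaussianReal 0 1 {y | a < |y|} = ENNReal.ofReal (2 * stdCdf (-a)) := by
  have hsplit : {y : ℝ | a < |y|} = Iio (-a) ∪ Ioi a := by
    ext y
    simp [lt_abs, lt_neg, or_comm]
  have hdisj : Disjoint (Iio (-a)) (Ioi a) :=
    (Iic_disjoint_Ioi (by linarith)).mono_left Iio_subset_Iic_self
  rw [hsplit, measure_union hdisj measurableSet_Ioi, gaussianReal_Iio, gaussianReal_Ioi,
    ← ENNReal.ofReal_add (stdCdf_pos _).le (stdCdf_pos _).le, two_mul]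

lemma gaussianReal_two_setOf_lt_abs {a : ℝ} (ha : 0 ≤ a) :
    gaussianReal 0 2 {y | a < |y|} = ENNReal.ofReal (2 * stdCdf (-a / √2)) := by
  have hscale : gaussianReal 0 2 = (gaussianReal 0 1).map (√2 * ·) := by
    rw [gaussianReal_map_const_mul, mul_zero, mul_one]
    congr
    ext
    simp
  rw [hscale, Measure.map_apply (measurable_const_mul _)
      (measurableSet_lt measurable_const continuous_abs.measurable),
    neg_div, ← gaussianReal_setOf_lt_abs (by positivity)]
  congr 1
  ext y
  simp [abs_mul, abs_of_nonneg (sqrt_nonneg 2), div_lt_iff₀, mul_comm]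

lemma pow_le_pow_mul_exp {a c : ℝ} (ha : 0 ≤ a) (hc : 0 < c) (n : ℕ) :
    a ^ n ≤ c ^ n * exp (n * (a / c - 1)) := by
  have hratio : a / c ≤ exp (a / c - 1) := by linarith [add_one_le_exp (a / c - 1)]
  calc a ^ n = c ^ n * (a / c) ^ n := by rw [← mul_pow, mul_div_cancel₀ a hc.ne']
    _ ≤ c ^ n * exp (a / c - 1) ^ n := by gcongr
    _ = c ^ n * exp (n * (a / c - 1)) := by rw [exp_nat_mul]

lemma integrable_abs_pow_gaussianReal (n : ℕ) :
    Integrable (fun y => |y| ^ n) (gaussianReal 0 1) :=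
  (memLp_id_gaussianReal n).integrable_norm_pow'

lemma integral_exp_mul_gaussianReal (t : ℝ) :
    ∫ y, exp (t * y) ∂gaussianReal 0 1 = exp (t ^ 2 / 2) := by
  simpa [mgf] using congrFun (mgf_id_gaussianReal (μ := 0) (v := 1)) t

/-- `|y|ⁿ ≤ (√n)ⁿ e^{-n} (e^{√n y} + e^{-√n y})`, integrated with the Gaussian moment generating
function. -/
lemma integral_abs_pow_gaussianReal_le {n : ℕ} (hn : n ≠ 0) :
    ∫ y, |y| ^ n ∂gaussianReal 0 1 ≤ 2 * √n ^ n := by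
  set c := √(n : ℝ)
  have hc : 0 < c := sqrt_pos.mpr (by positivity)
  have hc2 : c ^ 2 = n := sq_sqrt (Nat.cast_nonneg n)
  have hnc : (n : ℝ) / c = c := by
    rw [div_eq_iff hc.ne', mul_self_sqrt (Nat.cast_nonneg n)]
  have hpoint (y : ℝ) : |y| ^ n ≤ c ^ n * exp (-n) * (exp (c * y) + exp (-c * y)) := by
    have hexp : exp (n * (|y| / c - 1)) = exp (-n) * exp (c * |y|) := by
      rw [← exp_add, mul_sub, mul_one, ← mul_div_assoc, mul_div_right_comm, hnc]
      ring_nf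
    have hcosh : exp (c * |y|) ≤ exp (c * y) + exp (-c * y) := by
      rcases abs_choice y with h | h <;> rw [h]
      · linarith [exp_pos (-c * y)]
      · rw [mul_neg, ← neg_mul]; linarith [exp_pos (c * y)]
    calc |y| ^ n ≤ c ^ n * exp (n * (|y| / c - 1)) := pow_le_pow_mul_exp (abs_nonneg y) hc n
      _ ≤ _ := by rw [hexp, mul_assoc]; gcongr
  have hint (t : ℝ) := integrable_exp_mul_gaussianReal (μ := 0) (v := 1) t
  calc ∫ y, |y| ^ n ∂gaussianReal 0 1
      ≤ ∫ y, c ^ n * exp (-n) * (exp (c * y) + exp (-c * y)) ∂gaussianReal 0 1 :=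
        integral_mono (integrable_abs_pow_gaussianReal n) (((hint c).add (hint (-c))).const_mul _)
          hpoint
    _ = 2 * c ^ n * exp (-n / 2) := by
        rw [integral_const_mul, integral_add (hint c) (hint (-c)), integral_exp_mul_gaussianReal,
          integral_exp_mul_gaussianReal, neg_sq, hc2]
        have hhalf : exp (-n) * exp (n / 2) = exp (-n / 2) := by rw [← exp_add]; ring_nf
        linear_combination (2 * c ^ n) * hhalf
    _ ≤ 2 * c ^ n := by
        have : exp (-n / 2) ≤ 1 := exp_le_one_iff.mpr (by linarith [n.cast_nonneg (α := ℝ)])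
        exact mul_le_of_le_one_right (by positivity) this

lemma abs_sub_le_max_of_odd {g : ℝ → ℝ} {B : ℝ} (hodd : ∀ x, g (-x) = -g x)
    (hg : ∀ x, 0 ≤ x → 0 ≤ g x ∧ g x ≤ B) (x : ℝ) : |x - g x| ≤ max B |x| := by
  wlog hx : 0 ≤ x generalizing x
  · have h := this (-x) (by linarith)
    rwa [hodd, abs_neg, show -x - -g x = -(x - g x) by ring, abs_neg] at h
  obtain ⟨hg0, hgB⟩ := hg x hx
  rw [abs_of_nonneg hx, abs_le]
  constructor
  · linarith [le_max_left B x]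
  · linarith [le_max_right B x]

lemma integral_cond_abs_pow_le {Ω : Type*} [MeasurableSpace Ω] {μ : Measure Ω}
    [IsFiniteMeasure μ] {S : Set Ω} (hS : μ S ≠ 0) {F G : Ω → ℝ} {B : ℝ} (hB : 0 ≤ B) {n : ℕ}
    (hG : Integrable (fun ω => |G ω| ^ n) μ) (hFG : ∀ ω, |F ω| ≤ max B |G ω|) :
    ∫ ω, |F ω| ^ n ∂μ[|S] ≤ B ^ n + (μ S).toReal⁻¹ * ∫ ω, |G ω| ^ n ∂μ := by
  have := cond_isProbabilityMeasure (μ := μ) hS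
  have hGcond : Integrable (fun ω => |G ω| ^ n) μ[|S] :=
    hG.restrict.smul_measure (ENNReal.inv_ne_top.mpr hS)
  have hpoint (ω : Ω) : |F ω| ^ n ≤ B ^ n + |G ω| ^ n := by
    calc |F ω| ^ n ≤ max B |G ω| ^ n := by gcongr; exact hFG ω
      _ ≤ B ^ n + |G ω| ^ n := by
        rcases max_cases B |G ω| with ⟨h, _⟩ | ⟨h, _⟩ <;> rw [h] <;> simp [hB]
  calc ∫ ω, |F ω| ^ n ∂μ[|S] ≤ ∫ ω, (B ^ n + |G ω| ^ n) ∂μ[|S] :=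
        integral_mono_of_nonneg (ae_of_all _ fun ω => by positivity)
          ((integrable_const _).add hGcond) (ae_of_all _ hpoint)
    _ = B ^ n + (μ S).toReal⁻¹ * ∫ ω in S, |G ω| ^ n ∂μ := by
        rw [integral_add (integrable_const _) hGcond, integral_const, probReal_univ, one_smul,
          ProbabilityTheory.cond, integral_smul_measure, ENNReal.toReal_inv, smul_eq_mul]
    _ ≤ B ^ n + (μ S).toReal⁻¹ * ∫ ω, |G ω| ^ n ∂μ := by
        have := setIntegral_le_integral (s := S) hG (ae_of_all _ fun ω => by positivity)
        gcongr

lemma rpow_one_div_le_mul_sqrt {m a b : ℝ} {n : ℕ} (hn : n ≠ 0) (ha : 0 ≤ a)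
    (hm : |m| ≤ a ^ n + b * √n ^ n) : m ^ ((1 : ℝ) / n) ≤ (a + max 1 b) * √n := by
  have hsqrt : 1 ≤ √(n : ℝ) := one_le_sqrt.mpr (by exact_mod_cast Nat.one_le_iff_ne_zero.mpr hn)
  have hpow : |m| ≤ ((a + max 1 b) * √n) ^ n :=
    calc |m| ≤ a ^ n + b * √n ^ n := hm
      _ ≤ a ^ n * √n ^ n + max 1 b ^ n * √n ^ n := by
          gcongr ?_ + ?_
          · exact le_mul_of_one_le_right (by positivity) (one_le_pow₀ hsqrt)
          · exact mul_le_mul_of_nonneg_right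
              ((le_max_right 1 b).trans (le_self_pow₀ (le_max_left 1 b) hn)) (by positivity)
      _ ≤ ((a + max 1 b) * √n) ^ n := by
          rw [← add_mul, mul_pow]
          gcongr
          exact pow_add_pow_le ha (zero_le_one.trans (le_max_left 1 b)) hn
  calc m ^ ((1 : ℝ) / n) ≤ |m| ^ ((1 : ℝ) / n) :=
        (le_abs_self _).trans (abs_rpow_le_abs_rpow m _)
    _ ≤ (((a + max 1 b) * √n) ^ n) ^ ((1 : ℝ) / n) := by gcongr
    _ = (a + max 1 b) * √n := by
        rw [one_div, pow_rpow_inv_natCast (by positivity) hn]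

noncomputable def raoBlackwellCorrection (lam x : ℝ) : ℝ :=
  (stdPdf (-lam + x) - stdPdf (-lam - x)) / (stdCdf (-lam + x) + stdCdf (-lam - x))

lemma raoBlackwellCorrection_neg (lam x : ℝ) :
    raoBlackwellCorrection lam (-x) = -raoBlackwellCorrection lam x := by
  rw [raoBlackwellCorrection, raoBlackwellCorrection, ← sub_eq_add_neg, sub_neg_eq_add,
    add_comm (stdCdf _), ← neg_sub, neg_div]

lemma raoBlackwellCorrection_nonneg_and_le {lam x : ℝ} (hlam : 0 ≤ lam) (hx : 0 ≤ x) :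
    0 ≤ raoBlackwellCorrection lam x ∧
      raoBlackwellCorrection lam x ≤ (1 / √(2 * π)) / (2 * stdCdf (-lam)) := by
  have hden := two_mul_stdCdf_le_add (by linarith : -lam ≤ 0) hx
  have hden_pos : 0 < 2 * stdCdf (-lam) := by linarith [stdCdf_pos (-lam)]
  have hnum : stdPdf (-lam - x) ≤ stdPdf (-lam + x) := by
    apply stdPdf_le_stdPdf_of_abs_le
    rw [abs_le, abs_of_nonpos (by linarith : -lam - x ≤ 0)]
    constructor <;> linarith
  constructor
  · exact div_nonneg (by linarith) (by linarith)
  · have hnum_le : stdPdf (-lam + x) - stdPdf (-lam - x) ≤ 1 / √(2 * π) := by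
      linarith [stdPdf_le (-lam + x), stdPdf_nonneg (-lam - x)]
    exact div_le_div₀ (by positivity) hnum_le hden_pos hden

lemma measure_lt_abs_add_of_indepFun {Ω : Type*} [MeasurableSpace Ω] {μ : Measure Ω}
    {X Z : Ω → ℝ} (hX : μ.map X = gaussianReal 0 1) (hZ : μ.map Z = gaussianReal 0 1)
    (hind : IndepFun X Z μ) {a : ℝ} (ha : 0 ≤ a) :
    μ {ω | a < |X ω + Z ω|} = ENNReal.ofReal (2 * stdCdf (-a / √2)) := by
  have hmap : μ.map (X + Z) = gaussianReal 0 2 := by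
    rw [gaussianReal_add_gaussianReal_of_indepFun hind hX hZ]
    norm_num
  have hsum : HasLaw (X + Z) (gaussianReal 0 2) μ :=
    ⟨.of_map_ne_zero (by rw [hmap]; exact IsProbabilityMeasure.ne_zero _), hmap⟩
  rw [← gaussianReal_two_setOf_lt_abs ha]
  exact hsum.measure_eq (p := fun y => a < |y|)
    (measurableSet_lt measurable_const continuous_abs.measurable)

lemma integral_cond_abs_pow_residual_le {Ω : Type*} [MeasurableSpace Ω] {μ : Measure Ω}
    [IsFiniteMeasure μ] {X : Ω → ℝ} (hX : μ.map X = gaussianReal 0 1) {lam : ℝ} (hlam : 0 ≤ lam)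
    {S : Set Ω} (hS : μ S ≠ 0) (n : ℕ) :
    ∫ ω, |X ω - raoBlackwellCorrection lam (X ω)| ^ n ∂μ[|S]
      ≤ ((1 / √(2 * π)) / (2 * stdCdf (-lam))) ^ n
        + (μ S).toReal⁻¹ * ∫ y, |y| ^ n ∂gaussianReal 0 1 := by
  have hXm : AEMeasurable X μ := .of_map_ne_zero (by rw [hX]; exact IsProbabilityMeasure.ne_zero _)
  have hXn : Integrable (fun y : ℝ => |y| ^ n) (μ.map X) := hX ▸ integrable_abs_pow_gaussianReal n
  rw [← hX, integral_map hXm hXn.aestronglyMeasurable]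
  exact integral_cond_abs_pow_le hS (by have := stdCdf_pos (-lam); positivity)
    (hXn.comp_aemeasurable hXm) fun ω => abs_sub_le_max_of_odd (raoBlackwellCorrection_neg lam)
      (fun x hx => raoBlackwellCorrection_nonneg_and_le hlam hx) (X ω)

/-- Sub-Gaussianity of the Rao–Blackwellized residual conditional on selection:
with `X, Z ~ N(0,1)` independent, `S = {|X + Z| > λ}` and
`u = X − (φ(−λ+X) − φ(−λ−X))/(Φ(−λ+X) + Φ(−λ−X))`, for every even `n ≥ 2`,
`E[uⁿ ∣ S] ≤ ((1/√(2π))/(2Φ(−λ)))ⁿ + (1/(2Φ(−λ/√2)))·E[Yⁿ]` with `Y ~ N(0,1)`;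
consequently there is `K' > 0` with `(E[uⁿ ∣ S])^{1/n} ≤ K'·√n` for all `n ≥ 1`. -/
theorem stmt12 {Ω : Type*} [MeasurableSpace Ω] (μ : Measure Ω) [IsProbabilityMeasure μ]
    (X Z : Ω → ℝ) (lam : ℝ) (hlam : 0 < lam)
    (hX : Measure.map X μ = gaussianReal 0 1)
    (hZ : Measure.map Z μ = gaussianReal 0 1)
    (hind : IndepFun X Z μ) :
    (∀ n : ℕ, 2 ≤ n → Even n →
      ∫ ω, (X ω - (stdPdf (-lam + X ω) - stdPdf (-lam - X ω)) /
              (stdCdf (-lam + X ω) + stdCdf (-lam - X ω))) ^ n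
          ∂(ProbabilityTheory.cond μ {ω | lam < |X ω + Z ω|})
        ≤ ((1 / Real.sqrt (2 * Real.pi)) / (2 * stdCdf (-lam))) ^ n
          + (1 / (2 * stdCdf (-lam / Real.sqrt 2))) * ∫ y, y ^ n ∂(gaussianReal 0 1)) ∧
    ∃ K' : ℝ, 0 < K' ∧ ∀ n : ℕ, 1 ≤ n →
      (∫ ω, (X ω - (stdPdf (-lam + X ω) - stdPdf (-lam - X ω)) /
              (stdCdf (-lam + X ω) + stdCdf (-lam - X ω))) ^ n
          ∂(ProbabilityTheory.cond μ {ω | lam < |X ω + Z ω|})) ^ ((1 : ℝ) / n)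
        ≤ K' * Real.sqrt n := by
  set B := (1 / √(2 * π)) / (2 * stdCdf (-lam))
  set R := 2 * stdCdf (-lam / √2)
  have hB : 0 ≤ B := by have := stdCdf_pos (-lam); positivity
  have hR : 0 < R := by have := stdCdf_pos (-lam / √2); positivity
  have hμS : μ {ω | lam < |X ω + Z ω|} = ENNReal.ofReal R :=
    measure_lt_abs_add_of_indepFun hX hZ hind hlam.le
  have hmoment (n : ℕ) :
      ∫ ω, |X ω - raoBlackwellCorrection lam (X ω)| ^ n ∂μ[|{ω | lam < |X ω + Z ω|}]
        ≤ B ^ n + R⁻¹ * ∫ y, |y| ^ n ∂gaussianReal 0 1 := by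
    have hS : μ {ω | lam < |X ω + Z ω|} ≠ 0 := by
      rw [hμS]; exact (ENNReal.ofReal_pos.mpr hR).ne'
    simpa only [hμS, ENNReal.toReal_ofReal hR.le]
      using integral_cond_abs_pow_residual_le hX hlam.le hS n
  refine ⟨fun n _ hn => ?_, B + max 1 (2 * R⁻¹), by positivity, fun n hn => ?_⟩
  · have hmoment_even := hmoment n
    simp only [hn.pow_abs] at hmoment_even
    rw [one_div]
    exact hmoment_even
  · refine rpow_one_div_le_mul_sqrt (by omega) hB ((abs_integral_le_integral_abs).trans ?_)
    simp only [abs_pow]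
    calc _ ≤ B ^ n + R⁻¹ * ∫ y, |y| ^ n ∂gaussianReal 0 1 := hmoment n
      _ ≤ B ^ n + R⁻¹ * (2 * √n ^ n) := by
        gcongr
        exact integral_abs_pow_gaussianReal_le (by omega)
      _ = B ^ n + 2 * R⁻¹ * √n ^ n := by ring
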